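/- Let H be a complex Hilbert space, F a finite index set, and for each m ∈ F let λ_m : ℝ² → ℝ and Π_m : ℝ² → B(H) be continuously differentiable, with Π_m(z) Π_k(z) = δ_{mk} Π_m(z) for all z ∈ ℝ² and all m,k ∈ F. Let β : ℝ² → ℂ be continuously differentiable and set T := Σ_{m∈F} λ_m Π_m. Then for all n, k ∈ F and all z = (s,σ) ∈ ℝ²: Π_k(z) ( {T, β Π_n}(z) − {β Π_n, T}(z) ) Π_k(z) = δ_{kn} ( {λ_n, β}(z) − {β, λ_n}(z) ) Π_n(z), where {f,g} := ∂_σ f · ∂_s g − ∂_s f · ∂_σ g (operator products where applicable). -/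

import Mathlib

/-!
Write `Q = Π_k(z)`, `N = Π_n(z)`, `δ = δ_{kn}`, and let primes denote directional derivatives at
`z`. Differentiating `QT = TQ = λ_k Q` and `QN = NQ = δ Q` gives first-order relations which imply
`Q T' Q = λ_k' Q` and `Q (T'_u N'_v + N'_v T'_u) Q = Q'_u M Q'_v + Q'_v M Q'_u`, where
`M = (λ_k - T)(δ - N) = (δ - N)(λ_k - T)`. The latter is symmetric in `u, v`, so after compression
by `Q` the terms of the antisymmetrised bracket in which `β` is not differentiated cancel, and the
remaining ones give `2δ (∂_σ λ_k ∂_s β - ∂_s λ_k ∂_σ β) Q`.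
-/

noncomputable section

/-- Operator-valued Poisson bracket on `ℝ²_{s,σ}`: `{f,g} = ∂_σ f ∘ ∂_s g − ∂_s f ∘ ∂_σ g`. -/
def pb2 {H : Type*} [NormedAddCommGroup H] [InnerProductSpace ℂ H]
    (f g : ℝ × ℝ → (H →L[ℂ] H)) (z : ℝ × ℝ) : H →L[ℂ] H :=
  fderiv ℝ f z (0, 1) * fderiv ℝ g z (1, 0) - fderiv ℝ f z (1, 0) * fderiv ℝ g z (0, 1)

/-- Scalar Poisson bracket on `ℝ²_{s,σ}`. -/
def pb2s (f g : ℝ × ℝ → ℂ) (z : ℝ × ℝ) : ℂ :=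
  fderiv ℝ f z (0, 1) * fderiv ℝ g z (1, 0) - fderiv ℝ f z (1, 0) * fderiv ℝ g z (0, 1)

section Compression

/- Primed elements stand for directional derivatives; each hypothesis on them is the product
rule applied to one of the identities `Q * T = c • Q`, `T * Q = c • Q`, `Q * N = e • Q`,
`N * Q = e • Q`. -/
variable {R A : Type*} [CommRing R] [Ring A] [Algebra R A]

theorem compress_deriv_of_mul_eq_smul {Q T Q' T' : A} {c c' : R}
    (hQ : Q * Q = Q) (hTQ : T * Q = c • Q) (hQT' : Q * T' + Q' * T = c • Q' + c' • Q) :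
    Q * T' * Q = c' • Q := by
  rw [eq_sub_of_add_eq hQT', sub_mul, add_mul, mul_assoc Q', hTQ, smul_mul_assoc, smul_mul_assoc,
    hQ, mul_smul_comm]
  abel

theorem compress_deriv_mul_deriv {Q N T Q₁ T₁ Q₂ N₂ : A} {c c₁ e : R}
    (hNQ : N * Q = e • Q) (hQT₁ : Q * T₁ + Q₁ * T = c • Q₁ + c₁ • Q)
    (hQN₂ : Q * N₂ + Q₂ * N = e • Q₂) (hNQ₂ : N * Q₂ + N₂ * Q = e • Q₂) :
    Q * T₁ * N₂ * Q = Q₁ * ((algebraMap R A c - T) * (algebraMap R A e - N)) * Q₂ := by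
  have hQN₂Q : Q * N₂ * Q = 0 := by
    rw [eq_sub_of_add_eq hQN₂, sub_mul, mul_assoc, hNQ, mul_smul_comm, smul_mul_assoc, sub_self]
  have hN₂Q : N₂ * Q = (algebraMap R A e - N) * Q₂ := by
    rw [eq_sub_of_add_eq' hNQ₂, sub_mul, Algebra.smul_def]
  have hQT₁' : Q * T₁ = Q₁ * (algebraMap R A c - T) + c₁ • Q := by
    rw [eq_sub_of_add_eq hQT₁, mul_sub, ← Algebra.commutes, ← Algebra.smul_def]
    abel
  rw [hQT₁', add_mul, add_mul, smul_mul_assoc, smul_mul_assoc, hQN₂Q, smul_zero, add_zero,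
    mul_assoc, hN₂Q]
  simp only [mul_assoc]

theorem compress_deriv_mul_deriv_rev {Q N T Q₁ T₁ Q₂ N₂ : A} {c c₁ e : R}
    (hQN : Q * N = e • Q) (hTQ₁ : T * Q₁ + T₁ * Q = c • Q₁ + c₁ • Q)
    (hQN₂ : Q * N₂ + Q₂ * N = e • Q₂) (hNQ₂ : N * Q₂ + N₂ * Q = e • Q₂) :
    Q * N₂ * T₁ * Q = Q₂ * ((algebraMap R A e - N) * (algebraMap R A c - T)) * Q₁ := by
  have hQN₂Q : Q * N₂ * Q = 0 := by
    rw [mul_assoc, eq_sub_of_add_eq' hNQ₂, mul_sub, ← mul_assoc, hQN, mul_smul_comm,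
      smul_mul_assoc, sub_self]
  have hQN₂' : Q * N₂ = Q₂ * (algebraMap R A e - N) := by
    rw [eq_sub_of_add_eq hQN₂, mul_sub, ← Algebra.commutes, ← Algebra.smul_def]
  have hT₁Q : T₁ * Q = (algebraMap R A c - T) * Q₁ + c₁ • Q := by
    rw [eq_sub_of_add_eq' hTQ₁, sub_mul, ← Algebra.smul_def]
    abel
  rw [mul_assoc, hT₁Q, mul_add, mul_smul_comm, ← mul_assoc, ← mul_assoc, hQN₂Q, smul_zero,
    add_zero, hQN₂']

theorem compress_bracket_antisymm {ι : Type*} {Q N T : A} {Q' N' T' : ι → A} {c e b : R}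
    {c' b' : ι → R} (hQ : Q * Q = Q) (hQN : Q * N = e • Q) (hNQ : N * Q = e • Q)
    (hTQ : T * Q = c • Q) (hTN : T * N = N * T)
    (hQT' : ∀ i, Q * T' i + Q' i * T = c • Q' i + c' i • Q)
    (hTQ' : ∀ i, T * Q' i + T' i * Q = c • Q' i + c' i • Q)
    (hQN' : ∀ i, Q * N' i + Q' i * N = e • Q' i)
    (hNQ' : ∀ i, N * Q' i + N' i * Q = e • Q' i) (i j : ι) :
    Q * ((T' j * (b • N' i + b' i • N) - T' i * (b • N' j + b' j • N))
        - ((b • N' j + b' j • N) * T' i - (b • N' i + b' i • N) * T' j)) * Q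
      = (2 * e * (c' j * b' i - c' i * b' j)) • Q := by
  set M := (algebraMap R A c - T) * (algebraMap R A e - N)
  have hM : (algebraMap R A e - N) * (algebraMap R A c - T) = M :=
    ((Algebra.commute_algebraMap_right c _).sub_right
      ((Algebra.commute_algebraMap_left e T).sub_left hTN.symm)).eq
  have hcross : ∀ i j, Q * T' i * N' j * Q + Q * N' j * T' i * Q
      = Q' i * M * Q' j + Q' j * M * Q' i := fun i j => by
    rw [compress_deriv_mul_deriv hNQ (hQT' i) (hQN' j) (hNQ' j),
      compress_deriv_mul_deriv_rev hQN (hTQ' i) (hQN' j) (hNQ' j), hM]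
  have hdiag : ∀ i, Q * T' i * N * Q + Q * N * T' i * Q = (2 * e * c' i) • Q := fun i => by
    rw [mul_assoc _ N, hNQ, hQN, mul_smul_comm, smul_mul_assoc, smul_mul_assoc,
      compress_deriv_of_mul_eq_smul hQ hTQ (hQT' i)]
    module
  calc _ = b • ((Q * T' j * N' i * Q + Q * N' i * T' j * Q)
          - (Q * T' i * N' j * Q + Q * N' j * T' i * Q))
        + b' i • (Q * T' j * N * Q + Q * N * T' j * Q)
        - b' j • (Q * T' i * N * Q + Q * N * T' i * Q) := by
        simp only [mul_add, add_mul, mul_sub, sub_mul, mul_smul_comm, smul_mul_assoc, mul_assoc]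
        module
    _ = _ := by
        rw [hcross, hcross, hdiag, hdiag]
        module

end Compression

section Calculus

variable {E A 𝕜 : Type*} [NormedAddCommGroup E] [NormedSpace ℝ E] [NormedRing A]
  [NormedAlgebra ℝ A] [NormedRing 𝕜] [NormedAlgebra ℝ 𝕜] [Module 𝕜 A] [IsBoundedSMul 𝕜 A]
  [IsScalarTower ℝ 𝕜 A] {f g h : E → A} {z : E}

theorem fderiv_apply_of_mul_eq_smul {a : E → 𝕜} (hf : DifferentiableAt ℝ f z)
    (hg : DifferentiableAt ℝ g z) (ha : DifferentiableAt ℝ a z) (hh : DifferentiableAt ℝ h z)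
    (hfg : ∀ w, f w * g w = a w • h w) (v : E) :
    f z * fderiv ℝ g z v + fderiv ℝ f z v * g z
      = a z • fderiv ℝ h z v + fderiv ℝ a z v • h z := by
  simpa [fderiv_fun_mul' hf hg, fderiv_fun_smul ha hh] using
    congrArg (fun φ => fderiv ℝ φ z v) (funext hfg)

theorem fderiv_apply_of_mul_eq_const_smul {e : 𝕜} (hf : DifferentiableAt ℝ f z)
    (hg : DifferentiableAt ℝ g z) (hh : DifferentiableAt ℝ h z)
    (hfg : ∀ w, f w * g w = e • h w) (v : E) :
    f z * fderiv ℝ g z v + fderiv ℝ f z v * g z = e • fderiv ℝ h z v := by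
  simpa using fderiv_apply_of_mul_eq_smul hf hg (differentiableAt_const e) hh hfg v

end Calculus

section OrthogonalIdempotents

variable {R A F : Type*} [Fintype F] [Semiring R] [Semiring A] [Module R A] {P : F → A}

theorem OrthogonalIdempotents.sum_smul_mul [IsScalarTower R A A] (hP : OrthogonalIdempotents P)
    (a : F → R) (m : F) : (∑ j, a j • P j) * P m = a m • P m := by
  classical
  simp [Finset.sum_mul, smul_mul_assoc, hP.mul_eq]

theorem OrthogonalIdempotents.mul_sum_smul [SMulCommClass R A A] (hP : OrthogonalIdempotents P)
    (a : F → R) (m : F) : P m * (∑ j, a j • P j) = a m • P m := by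
  classical
  simp [Finset.mul_sum, mul_smul_comm, hP.mul_eq]

end OrthogonalIdempotents

theorem stmt12_general {H : Type*} [NormedAddCommGroup H] [InnerProductSpace ℂ H]
    {F : Type*} [Fintype F] [DecidableEq F]
    (lam : F → ℝ × ℝ → ℝ) (P : F → ℝ × ℝ → (H →L[ℂ] H))
    (hlam : ∀ m, ContDiff ℝ 1 (lam m)) (hP : ∀ m, ContDiff ℝ 1 (P m))
    (hidem : ∀ m z, P m z * P m z = P m z)
    (horth : ∀ m k, m ≠ k → ∀ z, P m z * P k z = 0)
    (β : ℝ × ℝ → ℂ) (hβ : ContDiff ℝ 1 β)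
    (T : ℝ × ℝ → (H →L[ℂ] H))
    (hT : T = fun z => ∑ m : F, ((lam m z : ℝ) : ℂ) • P m z) :
    ∀ (n k : F) (z : ℝ × ℝ),
      P k z * (pb2 T (fun w => β w • P n w) z - pb2 (fun w => β w • P n w) T z) * P k z
        = if k = n then
            (pb2s (fun w => ((lam n w : ℝ) : ℂ)) β z
              - pb2s β (fun w => ((lam n w : ℝ) : ℂ)) z) • P n z
          else 0 := by
  intro n k z
  set μ : F → ℝ × ℝ → ℂ := fun m w => (lam m w : ℂ)
  have hOI (w) : OrthogonalIdempotents (P · w) := ⟨(hidem · w), fun i j h => horth i j h w⟩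
  have dP (m) : DifferentiableAt ℝ (P m) z := (hP m).differentiable one_ne_zero z
  have dμ (m) : DifferentiableAt ℝ (μ m) z :=
    Complex.ofRealCLM.differentiableAt.comp z ((hlam m).differentiable one_ne_zero z)
  have dT : DifferentiableAt ℝ T z := hT ▸ .fun_sum fun m _ => (dμ m).smul (dP m)
  have hTP (m w) : T w * P m w = μ m w • P m w := hT ▸ (hOI w).sum_smul_mul _ m
  have hPT (m w) : P m w * T w = μ m w • P m w := hT ▸ (hOI w).mul_sum_smul _ m
  set δ : ℂ := if k = n then 1 else 0
  have hQN (w) : P k w * P n w = δ • P k w := by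
    rcases eq_or_ne k n with rfl | h
    · simp [δ, hidem]
    · simp [δ, h, horth _ _ h]
  have hNQ (w) : P n w * P k w = δ • P k w := by
    rcases eq_or_ne k n with rfl | h
    · simp [δ, hidem]
    · simp [δ, h, horth _ _ h.symm]
  simp only [pb2, fderiv_fun_smul (hβ.differentiable one_ne_zero z) (dP n), add_apply,
    smul_apply, ContinuousLinearMap.smulRight_apply]
  rw [compress_bracket_antisymm (hidem k z) (hQN z) (hNQ z) (hTP k z) (by rw [hTP, hPT])
    (fderiv_apply_of_mul_eq_smul (dP k) dT (dμ k) (dP k) (hPT k))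
    (fderiv_apply_of_mul_eq_smul dT (dP k) (dμ k) (dP k) (hTP k))
    (fderiv_apply_of_mul_eq_const_smul (dP k) (dP n) (dP k) hQN)
    (fderiv_apply_of_mul_eq_const_smul (dP n) (dP k) (dP k) hNQ)]
  split_ifs with h
  · subst h
    simp only [δ, pb2s, if_true]
    congr 1
    ring
  · simp [δ, h]

/-- for `T = Σ_m λ_m Π_m` with a pairwise orthogonal C¹ family of
projections and scalar `β`,
`Π_k({T, βΠ_n} − {βΠ_n, T})Π_k = δ_{kn}({λ_n,β} − {β,λ_n})Π_n`. -/
theorem stmt12 {H : Type*} [NormedAddCommGroup H] [InnerProductSpace ℂ H] [CompleteSpace H]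
    {F : Type*} [Fintype F] [DecidableEq F]
    (lam : F → ℝ × ℝ → ℝ) (P : F → ℝ × ℝ → (H →L[ℂ] H))
    (hlam : ∀ m, ContDiff ℝ 1 (lam m)) (hP : ∀ m, ContDiff ℝ 1 (P m))
    (hidem : ∀ m z, P m z * P m z = P m z)
    (horth : ∀ m k, m ≠ k → ∀ z, P m z * P k z = 0)
    (β : ℝ × ℝ → ℂ) (hβ : ContDiff ℝ 1 β)
    (T : ℝ × ℝ → (H →L[ℂ] H))
    (hT : T = fun z => ∑ m : F, ((lam m z : ℝ) : ℂ) • P m z) :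
    ∀ (n k : F) (z : ℝ × ℝ),
      P k z * (pb2 T (fun w => β w • P n w) z - pb2 (fun w => β w • P n w) T z) * P k z
        = if k = n then
            (pb2s (fun w => ((lam n w : ℝ) : ℂ)) β z
              - pb2s β (fun w => ((lam n w : ℝ) : ℂ)) z) • P n z
          else 0 :=
  stmt12_general lam P hlam hP hidem horth β hβ T hT
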